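/- Let Ω ⊆ ℝ^{n+1} contain (0,…,0,1) and suppose the set I(Ω) := ⋂_{(α,β)∈Ω} {x ∈ ℝ^n : α·x ≤ β} is nonempty. Then an inequality α·x ≤ β is valid for I(Ω) if and only if (α, β) ∈ cl cone(Ω). -/
import Mathlib


/-- The conical hull of a set: all finite nonnegative combinations. -/
def conicalHull {E : Type*} [AddCommMonoid E] [Module ℝ E] (s : Set E) : Set E :=
  {x | ∃ (k : ℕ) (c : Fin k → ℝ) (v : Fin k → E),
    (∀ i, 0 ≤ c i) ∧ (∀ i, v i ∈ s) ∧ x = ∑ i, c i • v i}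

lemma zero_mem_conicalHull {E : Type*} [AddCommMonoid E] [Module ℝ E] (s : Set E) :
    (0 : E) ∈ conicalHull s :=
  ⟨0, Fin.elim0, Fin.elim0, fun i => i.elim0, fun i => i.elim0, by simp⟩

lemma subset_conicalHull {E : Type*} [AddCommMonoid E] [Module ℝ E] (s : Set E) :
    s ⊆ conicalHull s := fun x hx =>
  ⟨1, fun _ => 1, fun _ => x, fun _ => zero_le_one, fun _ => hx, by simp⟩

lemma smul_mem_conicalHull {E : Type*} [AddCommMonoid E] [Module ℝ E] {s : Set E}
    {c : ℝ} (hc : 0 ≤ c) {x : E} (hx : x ∈ conicalHull s) : c • x ∈ conicalHull s := by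
  obtain ⟨k, d, v, hd, hv, rfl⟩ := hx
  exact ⟨k, fun i => c * d i, v, fun i => mul_nonneg hc (hd i), hv, by
    simp [Finset.smul_sum, mul_smul]⟩

lemma add_mem_conicalHull {E : Type*} [AddCommMonoid E] [Module ℝ E] {s : Set E}
    {x y : E} (hx : x ∈ conicalHull s) (hy : y ∈ conicalHull s) :
    x + y ∈ conicalHull s := by
  obtain ⟨k, c, v, hc, hv, rfl⟩ := hx
  obtain ⟨l, d, w, hd, hw, rfl⟩ := hy
  refine ⟨k + l, Fin.append c d, Fin.append v w, ?_, ?_, ?_⟩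
  · intro i
    refine Fin.addCases (fun i => ?_) (fun i => ?_) i <;>
      simp [Fin.append_left, Fin.append_right, hc, hd]
  · intro i
    refine Fin.addCases (fun i => ?_) (fun i => ?_) i <;>
      simp [Fin.append_left, Fin.append_right, hv, hw]
  · rw [Fin.sum_univ_add]
    simp [Fin.append_left, Fin.append_right]

lemma convex_conicalHull {E : Type*} [AddCommGroup E] [Module ℝ E] (s : Set E) :
    Convex ℝ (conicalHull s) := by
  intro x hx y hy a b ha hb _
  exact add_mem_conicalHull (smul_mem_conicalHull ha hx) (smul_mem_conicalHull hb hy)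

/-- The linear functional `p ↦ ∑ j, p.1 j * x j - p.2`. -/
noncomputable def evalMap (n : ℕ) (x : Fin n → ℝ) : ((Fin n → ℝ) × ℝ) →ₗ[ℝ] ℝ where
  toFun p := (∑ j, p.1 j * x j) - p.2
  map_add' p q := by
    simp only [Prod.fst_add, Prod.snd_add, Pi.add_apply, add_mul, Finset.sum_add_distrib]
    ring
  map_smul' c p := by
    simp only [Prod.smul_fst, Prod.smul_snd, Pi.smul_apply, smul_eq_mul, RingHom.id_apply,
      mul_sub, Finset.mul_sum, mul_assoc]

/-- For `Ω ⊆ ℝ^{n+1}` containing `(0,…,0,1)` with nonempty closure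
`I(Ω) = ⋂_{(α,β)∈Ω} {x : α·x ≤ β}`, an inequality `α·x ≤ β` is valid for
`I(Ω)` iff `(α, β) ∈ cl cone(Ω)`. -/
theorem valid_ineq_for_closure (n : ℕ) (Ω : Set ((Fin n → ℝ) × ℝ))
    (h0 : ((0 : Fin n → ℝ), (1 : ℝ)) ∈ Ω)
    (hne : {x : Fin n → ℝ | ∀ p ∈ Ω, ∑ j, p.1 j * x j ≤ p.2}.Nonempty)
    (α : Fin n → ℝ) (β : ℝ) :
    (∀ x ∈ {x : Fin n → ℝ | ∀ p ∈ Ω, ∑ j, p.1 j * x j ≤ p.2},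
        ∑ j, α j * x j ≤ β) ↔
      (α, β) ∈ closure (conicalHull Ω) := by
  constructor
  · -- hard direction: valid ⇒ in closure of cone
    intro hvalid
    by_contra hmem
    obtain ⟨f, u, hsep, hu⟩ := geometric_hahn_banach_closed_point
      (Convex.closure (convex_conicalHull Ω)) isClosed_closure hmem
    have hu0 : (0 : ℝ) < u := by
      have := hsep 0 (subset_closure (zero_mem_conicalHull Ω))
      simpa using this
    -- f is nonpositive on the cone
    have hnonpos : ∀ z ∈ conicalHull Ω, f z ≤ 0 := by
      intro z hz
      by_contra hfz
      push_neg at hfz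
      have hc : (0 : ℝ) ≤ (u + 1) / f z :=
        div_nonneg (by linarith) hfz.le
      have := hsep (((u + 1) / f z) • z)
        (subset_closure (smul_mem_conicalHull hc hz))
      rw [map_smul, smul_eq_mul, div_mul_cancel₀ _ (ne_of_gt hfz)] at this
      linarith
    obtain ⟨y, t, hyt⟩ : ∃ (y : Fin n → ℝ) (t : ℝ),
        ∀ (a : Fin n → ℝ) (b : ℝ), f (a, b) = (∑ j, a j * y j) + b * t := by
      refine ⟨fun j => f (Pi.single j 1, (0 : ℝ)), f ((0 : Fin n → ℝ), (1 : ℝ)), ?_⟩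
      intro a b
      have h1 : (a, b) = (∑ j, a j • ((Pi.single j 1 : Fin n → ℝ), (0 : ℝ)))
          + b • ((0 : Fin n → ℝ), (1 : ℝ)) := by
        refine Prod.ext ?_ ?_
        · rw [Prod.fst_add, Prod.fst_sum]
          funext i
          simp [Finset.sum_apply, Pi.single_apply, mul_ite]
        · rw [Prod.snd_add, Prod.snd_sum]
          simp
      rw [h1, map_add, map_sum, map_smul]
      simp only [map_smul, smul_eq_mul]
    have ht0 : t ≤ 0 := by
      have h1 := hnonpos _ (subset_conicalHull Ω h0)
      rw [hyt 0 1] at h1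
      simpa using h1
    have hΩkey : ∀ p ∈ Ω, (∑ j, p.1 j * y j) + p.2 * t ≤ 0 := by
      intro p hp
      rw [← hyt p.1 p.2]
      exact hnonpos _ (subset_conicalHull Ω hp)
    have hαβ : (0 : ℝ) < (∑ j, α j * y j) + β * t := by
      have := hyt α β
      rw [← this]
      linarith
    rcases lt_or_eq_of_le ht0 with htlt | hteq
    · -- case t < 0
      set x : Fin n → ℝ := fun j => y j / (-t) with hx
      have hnt : (0 : ℝ) < -t := by linarith
      have hxI : x ∈ {x : Fin n → ℝ | ∀ p ∈ Ω, ∑ j, p.1 j * x j ≤ p.2} := by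
        intro p hp
        have h1 := hΩkey p hp
        have h2 : (∑ j, p.1 j * x j) = (∑ j, p.1 j * y j) / (-t) := by
          rw [Finset.sum_div]
          exact Finset.sum_congr rfl fun j _ => by rw [hx]; ring
        rw [h2, div_le_iff₀ hnt]
        nlinarith
      have := hvalid x hxI
      have h2 : (∑ j, α j * x j) = (∑ j, α j * y j) / (-t) := by
        rw [Finset.sum_div]
        exact Finset.sum_congr rfl fun j _ => by rw [hx]; ring
      rw [h2] at this
      rw [div_le_iff₀ hnt] at this
      nlinarith
    · -- case t = 0
      rw [hteq] at hΩkey hαβ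
      simp only [mul_zero, add_zero] at hΩkey hαβ
      obtain ⟨x₀, hx₀⟩ := hne
      set Sα : ℝ := ∑ j, α j * y j with hSα
      set lam : ℝ := max 0 ((β - ∑ j, α j * x₀ j) / Sα + 1) with hlam
      have hlam0 : 0 ≤ lam := le_max_left _ _
      set x : Fin n → ℝ := fun j => x₀ j + lam * y j with hx
      have hxI : x ∈ {x : Fin n → ℝ | ∀ p ∈ Ω, ∑ j, p.1 j * x j ≤ p.2} := by
        intro p hp
        have h1 : (∑ j, p.1 j * x j) = (∑ j, p.1 j * x₀ j) + lam * ∑ j, p.1 j * y j := by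
          rw [Finset.mul_sum, ← Finset.sum_add_distrib]
          exact Finset.sum_congr rfl fun j _ => by rw [hx]; ring
        rw [h1]
        have := hx₀ p hp
        have := hΩkey p hp
        nlinarith
      have hval := hvalid x hxI
      have h1 : (∑ j, α j * x j) = (∑ j, α j * x₀ j) + lam * Sα := by
        rw [hSα, Finset.mul_sum, ← Finset.sum_add_distrib]
        exact Finset.sum_congr rfl fun j _ => by rw [hx]; ring
      rw [h1] at hval
      have hlam2 : (β - ∑ j, α j * x₀ j) / Sα + 1 ≤ lam := le_max_right _ _
      have : (β - ∑ j, α j * x₀ j) / Sα < lam := by linarith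
      rw [div_lt_iff₀ hαβ] at this
      linarith
  · -- easy direction: closure cone ⇒ valid
    intro hmem x hx
    set L := evalMap n x with hL
    have hLcont : Continuous L := L.continuous_of_finiteDimensional
    have hcone : ∀ z ∈ conicalHull Ω, L z ≤ 0 := by
      rintro z ⟨k, c, v, hc, hv, rfl⟩
      rw [map_sum]
      apply Finset.sum_nonpos
      intro i _
      rw [map_smul, smul_eq_mul]
      have hLv : L (v i) ≤ 0 := by
        have := hx (v i) (hv i)
        simp only [hL, evalMap, LinearMap.coe_mk, AddHom.coe_mk]
        linarith
      exact mul_nonpos_of_nonneg_of_nonpos (hc i) hLv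
    have hclo : closure (conicalHull Ω) ⊆ {z | L z ≤ 0} :=
      closure_minimal hcone (isClosed_le hLcont continuous_const)
    have := hclo hmem
    simp only [hL, evalMap, LinearMap.coe_mk, AddHom.coe_mk, Set.mem_setOf_eq] at this
    linarith
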